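/- (Post-measurement stabilizer product formula.) Let K₁, …, K_n be pairwise commuting Hermitian n-qubit Pauli tensors with Kᵢ² = 1, let M be a Hermitian n-qubit Pauli tensor with M² = 1, let a be an index with M K_a = −K_a M, let A = { i ≠ a : M Kᵢ = −Kᵢ M } be the set of remaining generators anticommuting with M, and let B ⊆ {1,…,n}∖{a} be an arbitrary subset. For i ≠ a define K_i' = M^{[i∈B]} · K_a^{[i∈A]} · Kᵢ (where the exponent [i∈S] is 1 if i ∈ S and 0 otherwise). Then for every subset c ⊆ {1,…,n} with a ∉ c, taking products in increasing index order, ∏_{i∈c} K_i' = M^{|c∩B| mod 2} · K_a^{|c∩A| mod 2} · ∏_{i∈c} Kᵢ. In particular each K_i' commutes with M, and the updated stabilizer equals M or K_a or M K_a times the original stabilizer S_c according to the parities of |c∩B| and |c∩A|. -/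
import Mathlib


open Matrix

noncomputable section

/-- Operators on the Hilbert space of qubits indexed by `ι`, as matrices. -/
abbrev QOp (ι : Type*) := Matrix (ι → Fin 2) (ι → Fin 2) ℂ

def Xmat : Matrix (Fin 2) (Fin 2) ℂ := !![0, 1; 1, 0]
def Ymat : Matrix (Fin 2) (Fin 2) ℂ := !![0, -Complex.I; Complex.I, 0]
def Zmat : Matrix (Fin 2) (Fin 2) ℂ := !![1, 0; 0, -1]

/-- `P` is a 2×2 Pauli matrix (including the identity). -/
def IsPauliMat (P : Matrix (Fin 2) (Fin 2) ℂ) : Prop :=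
  P = 1 ∨ P = Xmat ∨ P = Ymat ∨ P = Zmat

/-- `c` is an allowed Pauli phase. -/
def IsPhase (c : ℂ) : Prop :=
  c = 1 ∨ c = -1 ∨ c = Complex.I ∨ c = -Complex.I

/-- The operator `c • P₀ ⊗ ⋯ ⊗ P_{n-1}` with entries `c * ∏ i, P i (a i) (b i)`. -/
def pauliTensor {ι : Type*} [Fintype ι] (c : ℂ)
    (P : ι → Matrix (Fin 2) (Fin 2) ℂ) : QOp ι :=
  Matrix.of fun a b => c * ∏ i, P i (a i) (b i)

/-- `A` is an n-qubit Pauli tensor. -/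
def IsPauliTensor {ι : Type*} [Fintype ι] (A : QOp ι) : Prop :=
  ∃ (c : ℂ) (P : ι → Matrix (Fin 2) (Fin 2) ℂ),
    IsPhase c ∧ (∀ i, IsPauliMat (P i)) ∧ A = pauliTensor c P

/-- `A` acts trivially on qubit `q`, i.e. `A = I_q ⊗ B`: entrywise, the `(x,y)` block
of `A` with respect to qubit `q` equals `δ_{x y}` times a fixed block. -/
def ActsTriviallyOn {ι : Type*} [DecidableEq ι] (A : QOp ι) (q : ι) : Prop :=
  ∀ (a b : ι → Fin 2) (x y : Fin 2),
    A (Function.update a q x) (Function.update b q y) =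
      (if x = y then 1 else 0) * A (Function.update a q 0) (Function.update b q 0)

/-- The qubit support of an operator: those qubits on which it does not act trivially. -/
def qsupp {ι : Type*} [DecidableEq ι] (A : QOp ι) : Set ι :=
  {q | ¬ ActsTriviallyOn A q}

/-- Ordered product `∏_{i ∈ c} f i` taken in increasing index order. -/
def finOProd {m : ℕ} {α : Type*} [Monoid α] (c : Finset (Fin m)) (f : Fin m → α) : α :=
  ((c.sort (· ≤ ·)).map f).prod

/-- The stabilizer `S_c = ∏_{i ∈ c} K i` (in increasing index order). -/
def stabProd {n : ℕ} (K : Fin n → QOp (Fin n)) (c : Finset (Fin n)) : QOp (Fin n) :=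
  finOProd c K

/-- The stabilizer `S_c` is trivial with respect to the generators `K`. -/
def IsTrivial {n : ℕ} (K : Fin n → QOp (Fin n)) (c : Finset (Fin n)) : Prop :=
  ∃ α β : Finset (Fin n), α.Nonempty ∧ β.Nonempty ∧ Disjoint α β ∧ α ∪ β = c ∧
    qsupp (stabProd K α) ∩ qsupp (stabProd K β) = ∅

/-- The single-qubit operator `u` acting on qubit `q` (identity elsewhere). -/
def embed1 {ι : Type*} [Fintype ι] [DecidableEq ι]
    (u : Matrix (Fin 2) (Fin 2) ℂ) (q : ι) : QOp ι :=
  Matrix.of fun a b =>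
    u (a q) (b q) * ∏ i ∈ Finset.univ.erase q, (if a i = b i then (1 : ℂ) else 0)

/-- The controlled-Z gate on qubits `u` and `v`. -/
def CZop {ι : Type*} [Fintype ι] [DecidableEq ι] (u v : ι) : QOp ι :=
  Matrix.diagonal fun a => if a u = 1 ∧ a v = 1 then (-1 : ℂ) else 1

lemma pauliMat_cases (P Q : Matrix (Fin 2) (Fin 2) ℂ) (hP : IsPauliMat P) (hQ : IsPauliMat Q) :
    P * Q = Q * P ∨ P * Q = -(Q * P) := by
  rcases hP with h|h|h|h <;> rcases hQ with g|g|g|g <;> subst h <;> subst g <;>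
  solve
    | left; ext i j; fin_cases i <;> fin_cases j <;>
        simp [Xmat, Ymat, Zmat, Matrix.mul_apply, Fin.sum_univ_two]
    | right; ext i j; fin_cases i <;> fin_cases j <;>
        simp [Xmat, Ymat, Zmat, Matrix.mul_apply, Fin.sum_univ_two]

lemma pauliTensor_mul {ι : Type*} [Fintype ι] [DecidableEq ι] (c d : ℂ)
    (P Q : ι → Matrix (Fin 2) (Fin 2) ℂ) :
    pauliTensor c P * pauliTensor d Q = pauliTensor (c * d) (fun i => P i * Q i) := by
  ext a b
  simp only [pauliTensor, Matrix.mul_apply, Matrix.of_apply]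
  calc ∑ k : ι → Fin 2, (c * ∏ i, P i (a i) (k i)) * (d * ∏ i, Q i (k i) (b i))
      = c * d * ∑ k : ι → Fin 2, ∏ i, (P i (a i) (k i) * Q i (k i) (b i)) := by
        rw [Finset.mul_sum]
        refine Finset.sum_congr rfl fun k _ => ?_
        rw [mul_mul_mul_comm, ← Finset.prod_mul_distrib]
    _ = c * d * ∏ i, ∑ x : Fin 2, P i (a i) x * Q i x (b i) := by
        rw [Finset.prod_univ_sum]
        rw [Fintype.piFinset_univ]
    _ = c * d * ∏ i, (P i * Q i) (a i) (b i) := by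
        simp [Matrix.mul_apply]

lemma pauliTensor_smul_factors {ι : Type*} [Fintype ι] (c : ℂ)
    (s : ι → ℂ) (P Q : ι → Matrix (Fin 2) (Fin 2) ℂ)
    (h : ∀ i, P i = s i • Q i) :
    pauliTensor c P = (∏ i, s i) • pauliTensor c Q := by
  ext a b
  simp only [pauliTensor, Matrix.of_apply, Matrix.smul_apply, smul_eq_mul]
  calc c * ∏ i, P i (a i) (b i) = c * ∏ i, (s i * Q i (a i) (b i)) := by
        congr 1; exact Finset.prod_congr rfl fun i _ => by rw [h i]; simp
    _ = (∏ i, s i) * (c * ∏ i, Q i (a i) (b i)) := by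
        rw [Finset.prod_mul_distrib]; ring

lemma pauliTensor_comm_or_anticomm {ι : Type*} [Fintype ι] [DecidableEq ι]
    (T U : QOp ι) (hT : IsPauliTensor T) (hU : IsPauliTensor U) :
    T * U = U * T ∨ T * U = -(U * T) := by
  obtain ⟨c, P, -, hP, rfl⟩ := hT
  obtain ⟨d, Q, -, hQ, rfl⟩ := hU
  have key : ∀ i, ∃ s : ℂ, (s = 1 ∨ s = -1) ∧ P i * Q i = s • (Q i * P i) := by
    intro i
    rcases pauliMat_cases (P i) (Q i) (hP i) (hQ i) with h | h
    · exact ⟨1, Or.inl rfl, by simpa using h⟩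
    · exact ⟨-1, Or.inr rfl, by simpa using h⟩
  choose s hs1 hs2 using key
  rw [pauliTensor_mul, pauliTensor_mul,
    pauliTensor_smul_factors (c * d) s _ _ hs2, mul_comm d c]
  have : (∏ i, s i) = 1 ∨ (∏ i, s i) = -1 := by
    refine Finset.prod_induction s (fun x => x = 1 ∨ x = -1) ?_ (Or.inl rfl)
      (fun i _ => hs1 i)
    rintro x y (rfl | rfl) (rfl | rfl) <;> norm_num
  rcases this with h | h <;> rw [h]
  · left; simp
  · right; simp

lemma finOProd_empty {m : ℕ} {α : Type*} [Monoid α] (f : Fin m → α) :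
    finOProd (∅ : Finset (Fin m)) f = 1 := by simp [finOProd]

lemma finOProd_insert_min {m : ℕ} {α : Type*} [Monoid α] (f : Fin m → α)
    (s : Finset (Fin m)) (x : Fin m) (hx : x ∉ s) (hmin : ∀ y ∈ s, x ≤ y) :
    finOProd (insert x s) f = f x * finOProd s f := by
  unfold finOProd
  rw [Finset.sort_insert (r := (· ≤ ·)) hmin hx]
  simp

lemma pow_mod_two {α : Type*} [Monoid α] (u : α) (h : u * u = 1) (k : ℕ) :
    u ^ k = u ^ (k % 2) := by
  conv_lhs => rw [← Nat.div_add_mod k 2, pow_add, pow_mul]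
  rw [show u ^ 2 = 1 by rw [pow_two, h], one_pow, one_mul]

/-- (Post-measurement stabilizer product formula.) With
`K_i' = M^{[i∈B]} · K_a^{[i∈A]} · K_i` for `i ≠ a`, where `A` is the set of remaining
generators anticommuting with `M` and `B ⊆ {1,…,n} \ {a}` is arbitrary: each `K_i'`
commutes with `M`, and for every `c` with `a ∉ c`,
`∏_{i∈c} K_i' = M^(|c∩B| mod 2) * K_a^(|c∩A| mod 2) * ∏_{i∈c} K_i`. -/
theorem post_measurement_stabilizer_formula {n : ℕ}
    (K : Fin n → QOp (Fin n)) (hPauli : ∀ i, IsPauliTensor (K i))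
    (hcomm : ∀ i j, Commute (K i) (K j))
    (hherm : ∀ i, (K i)ᴴ = K i) (hsq : ∀ i, K i * K i = 1)
    (M : QOp (Fin n)) (hM : IsPauliTensor M) (hMherm : Mᴴ = M) (hMsq : M * M = 1)
    (a : Fin n) (hanti : M * K a = -(K a * M))
    (A : Finset (Fin n)) (hA : ∀ i, i ∈ A ↔ (i ≠ a ∧ M * K i = -(K i * M)))
    (B : Finset (Fin n)) (hB : a ∉ B)
    (K' : Fin n → QOp (Fin n))
    (hK' : ∀ i, i ≠ a →
      K' i = (if i ∈ B then M else 1) * (if i ∈ A then K a else 1) * K i) :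
    (∀ i, i ≠ a → Commute M (K' i)) ∧
      ∀ c : Finset (Fin n), a ∉ c →
        stabProd K' c =
          M ^ ((c ∩ B).card % 2) * K a ^ ((c ∩ A).card % 2) * stabProd K c := by
  have comm_swap : ∀ (U V X : QOp (Fin n)), U * V = V * U → U * (V * X) = V * (U * X) :=
    fun U V X h => by rw [← mul_assoc, h, mul_assoc]
  -- M commutes with K i when i ∉ A, i ≠ a
  have hMKi : ∀ i, i ∉ A → i ≠ a → Commute M (K i) := by
    intro i hiA hia
    rcases pauliTensor_comm_or_anticomm M (K i) hM (hPauli i) with h | h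
    · exact h
    · exact absurd ((hA i).2 ⟨hia, h⟩) hiA
  have hanti' : ∀ i, i ∈ A → M * K i = -(K i * M) := fun i hi => ((hA i).1 hi).2
  -- M commutes with (if i ∈ A then K a else 1) * K i
  have hMT : ∀ i, i ≠ a → Commute M ((if i ∈ A then K a else 1) * K i) := by
    intro i hia
    by_cases h : i ∈ A
    · simp only [if_pos h]
      show M * (K a * K i) = K a * K i * M
      rw [← mul_assoc, hanti, neg_mul, mul_assoc, hanti' i h, mul_neg, neg_neg, ← mul_assoc]
    · simp only [if_neg h, one_mul]; exact hMKi i h hia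
  have hMB : ∀ i, Commute M (if i ∈ B then M else 1) := by
    intro i; by_cases h : i ∈ B <;> simp [h]
  constructor
  · intro i hia
    rw [hK' i hia, mul_assoc]
    exact Commute.mul_right (hMB i) (hMT i hia)
  · intro c
    induction c using Finset.strongInduction with
    | _ c ih =>
      intro hac
      rcases c.eq_empty_or_nonempty with rfl | hne
      · simp [stabProd, finOProd_empty]
      · set x := c.min' hne with hxdef
        have hxc : x ∈ c := c.min'_mem hne
        set s := c.erase x with hsdef
        have hxs : x ∉ s := Finset.notMem_erase _ _
        have hins : insert x s = c := Finset.insert_erase hxc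
        have hmin : ∀ y ∈ s, x ≤ y := fun y hy => c.min'_le y (Finset.mem_of_mem_erase hy)
        have hxa : x ≠ a := fun h => hac (h ▸ hxc)
        have has : a ∉ s := fun h => hac (Finset.mem_of_mem_erase h)
        have IH := ih s (Finset.erase_ssubset hxc) has
        set S := stabProd K s with hSdef
        set p := (s ∩ B).card with hpdef
        set q := (s ∩ A).card with hqdef
        set Ka' := (if x ∈ A then K a else 1) with hKa'def
        set Mb := (if x ∈ B then M else 1) with hMbdef
        set T := Ka' * K x with hTdef
        -- card identities
        have cardB : (c ∩ B).card = (if x ∈ B then 1 else 0) + p := by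
          rw [← hins]
          by_cases h : x ∈ B
          · rw [Finset.insert_inter_of_mem h, if_pos h,
              Finset.card_insert_of_notMem (fun hx => hxs (Finset.mem_of_mem_inter_left hx))]
            omega
          · rw [Finset.insert_inter_of_notMem h, if_neg h, zero_add]
        have cardA : (c ∩ A).card = (if x ∈ A then 1 else 0) + q := by
          rw [← hins]
          by_cases h : x ∈ A
          · rw [Finset.insert_inter_of_mem h, if_pos h,
              Finset.card_insert_of_notMem (fun hx => hxs (Finset.mem_of_mem_inter_left hx))]
            omega
          · rw [Finset.insert_inter_of_notMem h, if_neg h, zero_add]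
        have hMpow : M ^ ((c ∩ B).card % 2) = Mb * M ^ (p % 2) := by
          rw [cardB, ← pow_mod_two M hMsq, pow_add, pow_mod_two M hMsq p, hMbdef]
          by_cases h : x ∈ B <;> simp [h]
        have hKsq : K a * K a = 1 := hsq a
        have hKapow : K a ^ ((c ∩ A).card % 2) = Ka' * K a ^ (q % 2) := by
          rw [cardA, ← pow_mod_two (K a) hKsq, pow_add, pow_mod_two (K a) hKsq q, hKa'def]
          by_cases h : x ∈ A <;> simp [h]
        -- product decompositions
        have hprod' : stabProd K' c = K' x * stabProd K' s := by
          rw [← hins]; exact finOProd_insert_min K' s x hxs hmin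
        have hprodK : stabProd K c = K x * S := by
          rw [← hins]; exact finOProd_insert_min K s x hxs hmin
        -- commute facts
        have c1 : T * M ^ (p % 2) = M ^ (p % 2) * T :=
          (((hMT x hxa).pow_left (p % 2)).eq).symm
        have cKaT : Commute (K a) T := by
          refine Commute.mul_right ?_ (hcomm a x)
          rw [hKa'def]; by_cases h : x ∈ A <;> simp [h]
        have c3 : T * K a ^ (q % 2) = K a ^ (q % 2) * T :=
          ((cKaT.pow_left (q % 2)).eq).symm
        have cqa : K a ^ (q % 2) * Ka' = Ka' * K a ^ (q % 2) := by
          rw [hKa'def]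
          by_cases h : x ∈ A
          · rw [if_pos h]; exact ((Commute.refl (K a)).pow_left _).eq
          · simp [h]
        rw [hprod', IH, hprodK, hMpow, hKapow, hK' x hxa, ← hMbdef, ← hKa'def]
        -- goal: Mb * Ka' * K x * (M^(p%2) * (K a^(q%2) * S)) = Mb * M^(p%2) * (Ka' * K a^(q%2)) * (K x * S)
        calc Mb * Ka' * K x * (M ^ (p % 2) * K a ^ (q % 2) * S)
            = Mb * (T * (M ^ (p % 2) * (K a ^ (q % 2) * S))) := by
              rw [hTdef]; simp only [mul_assoc]
          _ = Mb * (M ^ (p % 2) * (T * (K a ^ (q % 2) * S))) := by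
              rw [comm_swap _ _ _ c1]
          _ = Mb * (M ^ (p % 2) * (K a ^ (q % 2) * (T * S))) := by
              rw [comm_swap _ _ _ c3]
          _ = Mb * (M ^ (p % 2) * (K a ^ (q % 2) * (Ka' * (K x * S)))) := by
              rw [hTdef, mul_assoc]
          _ = Mb * (M ^ (p % 2) * (Ka' * (K a ^ (q % 2) * (K x * S)))) := by
              rw [comm_swap _ _ _ cqa]
          _ = Mb * M ^ (p % 2) * (Ka' * K a ^ (q % 2)) * (K x * S) := by
              simp only [mul_assoc]
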